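/- arXiv:1510.04207 — 4 statements merged into one kernel-verified Lean document; each statement's English description precedes it below -/
import Mathlib

section
/- Let H be a compact connected Lie group with maximal torus T, Weyl group W, cocharacter lattice Λ ⊂ 𝔱 (the kernel of exp: 𝔱 → T), and alcove 𝒜 with 0 ∈ closure(𝒜). Define 𝒜' to be the set of α in closure(𝒜) such that all eigenvalues of ad(α) have absolute value strictly less than 1, and let W𝒜' = ⋃_{w∈W} w·𝒜'. Then for every α in closure(𝒜) there exist an integer k and an element λ ∈ Λ such that kα + λ ∈ W𝒜'. -/
open Set Bornology Filter Metric

/-- Let `H` be a compact connected Lie group with maximal torus `T`,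
Weyl group `W`, cocharacter lattice `Λ = ker(exp : 𝔱 → T)` (a full-rank discrete
subgroup of `𝔱`), and alcove `𝒜` with `0 ∈ closure 𝒜`.  Let `𝒜' ⊆ closure 𝒜` be the
set of `α ∈ closure 𝒜` all of whose `ad`-eigenvalues have absolute value `< 1`, and
`W𝒜' = ⋃_{w ∈ W} w·𝒜'`, which is an open neighbourhood of `0` stable under `W`.
Then for every `α ∈ closure 𝒜` there are an integer `k` and `λ ∈ Λ` with
`kα + λ ∈ W𝒜'`. -/
theorem stmt_1 {𝔱 : Type*} [NormedAddCommGroup 𝔱] [NormedSpace ℝ 𝔱]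
    [FiniteDimensional ℝ 𝔱]
    (Λ : AddSubgroup 𝔱) (hdisc : DiscreteTopology Λ)
    (hspan : Submodule.span ℝ (Λ : Set 𝔱) = ⊤)
    (W : Subgroup (𝔱 ≃ₗ[ℝ] 𝔱)) (𝒜 𝒜' : Set 𝔱)
    (h𝒜' : 𝒜' ⊆ closure 𝒜)
    (hnhds : (⋃ w ∈ W, (w : 𝔱 ≃ₗ[ℝ] 𝔱) '' 𝒜') ∈ nhds (0 : 𝔱)) :
    ∀ α ∈ closure 𝒜, ∃ (k : ℤ) (lam : 𝔱), k ≠ 0 ∧ lam ∈ Λ ∧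
      (k : ℝ) • α + lam ∈ ⋃ w ∈ W, (w : 𝔱 ≃ₗ[ℝ] 𝔱) '' 𝒜' := by
  intro α _
  -- Extract a basis of `𝔱` consisting of elements of `Λ`.
  obtain ⟨s, hsΛ, hs_span, hs_li⟩ := exists_linearIndependent ℝ (Λ : Set 𝔱)
  rw [hspan] at hs_span
  haveI : Fintype s := hs_li.setFinite.fintype
  let b : Module.Basis s ℝ 𝔱 := Module.Basis.mk hs_li (by rw [Subtype.range_coe, hs_span])
  have hb_mem : ∀ i : s, b i ∈ Λ := fun i => by
    rw [Module.Basis.mk_apply]; exact hsΛ i.2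
  -- The integer span of `b` is contained in `Λ`.
  have hspanb : ∀ x : 𝔱, x ∈ Submodule.span ℤ (Set.range ⇑b) → x ∈ Λ := by
    intro x hx
    have : Submodule.span ℤ (Set.range ⇑b) ≤ AddSubgroup.toIntSubmodule Λ := by
      rw [Submodule.span_le]
      rintro - ⟨i, rfl⟩
      exact hb_mem i
    exact this hx
  -- An `ε`-ball around `0` is contained in the target set.
  obtain ⟨ε, hε, hball⟩ := Metric.mem_nhds_iff.mp hnhds
  -- The fractional parts of the multiples of `α` form a bounded sequence.
  set g : ℕ → 𝔱 := fun n => ZSpan.fract b ((n : ℝ) • α) with hg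
  have hg_mem : ∀ n, g n ∈ ZSpan.fundamentalDomain b := fun n =>
    ZSpan.fract_mem_fundamentalDomain b _
  obtain ⟨a, -, φ, hφ, hconv⟩ :=
    tendsto_subseq_of_bounded (ZSpan.fundamentalDomain_isBounded b) hg_mem
  -- Two far-apart terms of the subsequence are within `ε` of each other.
  obtain ⟨N, hN⟩ := (Metric.tendsto_atTop.mp hconv) (ε / 2) (half_pos hε)
  set n := φ N
  set m := φ (N + 1)
  have hnm : n < m := hφ (Nat.lt_succ_self N)
  have hdist : dist (g m) (g n) < ε := by
    calc dist (g m) (g n) ≤ dist (g m) a + dist (g n) a := dist_triangle_right _ _ _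
    _ < ε / 2 + ε / 2 := add_lt_add (hN (N + 1) (Nat.le_succ N)) (hN N le_rfl)
    _ = ε := add_halves ε
  -- Define `k` and `lam`.
  refine ⟨(m : ℤ) - n, (ZSpan.floor b ((n : ℝ) • α) : 𝔱) - (ZSpan.floor b ((m : ℝ) • α) : 𝔱),
    ?_, ?_, ?_⟩
  · have : (n : ℤ) < m := by exact_mod_cast hnm
    omega
  · exact sub_mem (hspanb _ (ZSpan.floor b ((n : ℝ) • α)).2)
      (hspanb _ (ZSpan.floor b ((m : ℝ) • α)).2)
  · apply hball
    have key : ((((m : ℤ) - n : ℤ) : ℝ)) • α +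
        ((ZSpan.floor b ((n : ℝ) • α) : 𝔱) - (ZSpan.floor b ((m : ℝ) • α) : 𝔱)) = g m - g n := by
      simp only [hg, ZSpan.fract]
      push_cast
      rw [sub_smul]
      abel
    rw [key, Metric.mem_ball, dist_zero_right, ← dist_eq_norm]
    exact hdist
end

section
/- Let Δ* be the punctured unit disc and let g: Δ* → SL_N(ℂ) be a holomorphic map such that for some integer k the map z ↦ z^k g(z), valued in End(ℂ^N), extends holomorphically to Δ (i.e. g is meromorphic at 0). Let σ: Δ → ℙ^{N'} be a holomorphic map into projective space, and suppose SL_N(ℂ) acts linearly on ℙ^{N'} via a homomorphism to GL_{N'+1}(ℂ) given by polynomial (algebraic) matrix entries. Then the map z ↦ g(z)·σ(z) from Δ* to ℙ^{N'} extends to a holomorphic map Δ → ℙ^{N'}. -/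
open Metric Filter Topology in
theorem stmt_12 (N N' : ℕ)
    (g : ℂ → Matrix (Fin N) (Fin N) ℂ)
    (hg : ∀ i j, DifferentiableOn ℂ (fun z => g z i j) (ball (0 : ℂ) 1 \ {0}))
    (hdet : ∀ z ∈ ball (0 : ℂ) 1 \ {0}, (g z).det = 1)
    (k : ℕ) (G : ℂ → Matrix (Fin N) (Fin N) ℂ)
    (hG : ∀ i j, DifferentiableOn ℂ (fun z => G z i j) (ball (0 : ℂ) 1))
    (hGg : ∀ z ∈ ball (0 : ℂ) 1 \ {0}, G z = z ^ k • g z)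
    (ρ : Matrix (Fin N) (Fin N) ℂ → Matrix (Fin (N' + 1)) (Fin (N' + 1)) ℂ)
    (hρ_one : ρ 1 = 1)
    (hρ_mul : ∀ A B, ρ (A * B) = ρ A * ρ B)
    (hρ_poly : ∀ i j, ∃ p : MvPolynomial (Fin N × Fin N) ℂ,
      ∀ A, ρ A i j = MvPolynomial.eval (fun q => A q.1 q.2) p)
    (s : ℂ → Fin (N' + 1) → ℂ)
    (hs : DifferentiableOn ℂ s (ball (0 : ℂ) 1))
    (hs0 : ∀ z ∈ ball (0 : ℂ) 1, s z ≠ 0) :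
    ∃ (s' : ℂ → Fin (N' + 1) → ℂ) (m : ℤ),
      DifferentiableOn ℂ s' (ball (0 : ℂ) 1) ∧
      (∀ z ∈ ball (0 : ℂ) 1, s' z ≠ 0) ∧
      (∀ z ∈ ball (0 : ℂ) 1 \ {0}, (ρ (g z)).mulVec (s z) = z ^ m • s' z) := by
  classical
  choose P hP using hρ_poly
  set D := ball (0:ℂ) 1 with hD
  have hD_open : IsOpen D := isOpen_ball
  have h0D : (0:ℂ) ∈ D := by simp [hD]
  have hDnhds : D ∈ 𝓝 (0:ℂ) := hD_open.mem_nhds h0D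
  set d : ℕ := Finset.univ.sup
    (fun ij : Fin (N'+1) × Fin (N'+1) => (P ij.1 ij.2).totalDegree) with hd
  set M : ℕ := k * d with hM
  set F : ℂ → Matrix (Fin (N'+1)) (Fin (N'+1)) ℂ := fun z i j =>
    ∑ m ∈ (P i j).support, (P i j).coeff m *
      (z ^ (k * (d - m.sum fun _ e => e)) *
        ∏ q : Fin N × Fin N, (G z q.1 q.2) ^ m q) with hF
  have hF_diff : ∀ i j, DifferentiableOn ℂ (fun z => F z i j) D := by
    intro i j
    apply DifferentiableOn.fun_sum
    intro m _
    refine DifferentiableOn.const_mul ?_ _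
    refine DifferentiableOn.mul ?_ ?_
    · exact (differentiable_pow _).differentiableOn
    · exact DifferentiableOn.fun_finsetProd (fun q _ => (hG q.1 q.2).pow _)
  have hF_eq : ∀ z ∈ D \ {0}, ∀ i j, F z i j = z ^ M * ρ (g z) i j := by
    intro z hz i j
    rw [hP i j, MvPolynomial.eval_eq', Finset.mul_sum]
    apply Finset.sum_congr rfl
    intro m hm
    have hmd : (m.sum fun _ e => e) ≤ d :=
      le_trans (MvPolynomial.le_totalDegree hm)
        (Finset.le_sup (f := fun ij : Fin (N'+1) × Fin (N'+1) =>
          (P ij.1 ij.2).totalDegree) (Finset.mem_univ (i, j)))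
    have hGg' : ∀ q : Fin N × Fin N, G z q.1 q.2 = z ^ k * g z q.1 q.2 := by
      intro q; rw [hGg z hz]; rfl
    have hprod : (∏ q : Fin N × Fin N, (G z q.1 q.2) ^ m q)
        = z ^ (k * (m.sum fun _ e => e)) * ∏ q : Fin N × Fin N, (g z q.1 q.2) ^ m q := by
      simp_rw [hGg', mul_pow]
      rw [Finset.prod_mul_distrib, Finset.prod_pow_eq_pow_sum, ← pow_mul,
        Finsupp.sum_fintype _ _ (fun _ => rfl)]
    rw [hprod]
    have hpow : z ^ (k * (d - m.sum fun _ e => e)) * z ^ (k * (m.sum fun _ e => e))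
        = z ^ M := by
      rw [← pow_add, ← Nat.mul_add, Nat.sub_add_cancel hmd]
    rw [← hpow]; ring
  have hdet_unit : ∀ z ∈ D \ {0}, IsUnit (g z).det := by
    intro z hz; rw [hdet z hz]; exact isUnit_one
  have hρinv : ∀ z ∈ D \ {0}, ρ ((g z)⁻¹) * ρ (g z) = 1 := by
    intro z hz
    rw [← hρ_mul, Matrix.nonsing_inv_mul _ (hdet_unit z hz), hρ_one]
  have hvec : ∀ z ∈ D \ {0}, (ρ (g z)).mulVec (s z) ≠ 0 := by
    intro z hz hcon
    have h1 : (ρ ((g z)⁻¹)).mulVec ((ρ (g z)).mulVec (s z)) = 0 := by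
      rw [hcon, Matrix.mulVec_zero]
    rw [Matrix.mulVec_mulVec, hρinv z hz, Matrix.one_mulVec] at h1
    exact hs0 z hz.1 h1
  set t : ℂ → Fin (N'+1) → ℂ := fun z => (F z).mulVec (s z) with ht
  have hsj : ∀ j, DifferentiableOn ℂ (fun z => s z j) D := fun j => (differentiableOn_pi.1 hs) j
  have ht_diff : DifferentiableOn ℂ t D := by
    rw [differentiableOn_pi]
    intro i
    have heq : (fun z => t z i) = fun z => ∑ j, F z i j * s z j := by
      funext z; simp [ht, Matrix.mulVec, dotProduct]
    rw [heq]
    exact DifferentiableOn.fun_sum fun j _ => (hF_diff i j).mul (hsj j)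
  have ht_eq : ∀ z ∈ D \ {0}, t z = z ^ M • (ρ (g z)).mulVec (s z) := by
    intro z hz
    have hFz : F z = z ^ M • ρ (g z) := by
      ext i j
      rw [hF_eq z hz i j]; simp [Matrix.smul_apply]
    show (F z).mulVec (s z) = _
    rw [hFz, Matrix.smul_mulVec]
  have ht_ne : ∀ z ∈ D \ {0}, t z ≠ 0 := by
    intro z hz
    have hz0 : z ≠ 0 := fun h => hz.2 (by simp [h])
    rw [ht_eq z hz]
    exact smul_ne_zero (pow_ne_zero _ hz0) (hvec z hz)
  have hA : ∀ i, AnalyticAt ℂ (fun z => t z i) 0 := fun i =>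
    ((differentiableOn_pi.1 ht_diff) i).analyticAt hDnhds
  set o : Fin (N'+1) → ℕ∞ := fun i => analyticOrderAt (fun z => t z i) 0 with ho
  have hne_top : ∃ i, o i ≠ ⊤ := by
    by_contra hcon
    push_neg at hcon
    have hev : ∀ᶠ z in 𝓝 (0:ℂ), t z = 0 := by
      have h1 : ∀ i, ∀ᶠ z in 𝓝 (0:ℂ), t z i = 0 :=
        fun i => (analyticOrderAt_eq_top).1 (hcon i)
      filter_upwards [Filter.eventually_all.2 h1] with z hz
      funext i; exact hz i
    have h2 : ∀ᶠ z in 𝓝[≠] (0:ℂ), t z = 0 ∧ z ∈ D :=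
      ((hev.and (hD_open.eventually_mem h0D)).filter_mono nhdsWithin_le_nhds)
    obtain ⟨z, hz1, hz2⟩ := (h2.and self_mem_nhdsWithin).exists
    exact ht_ne z ⟨hz1.2, hz2⟩ hz1.1
  obtain ⟨i0, -, hi0⟩ := Finset.exists_mem_eq_inf Finset.univ Finset.univ_nonempty o
  set lE : ℕ∞ := Finset.univ.inf o with hℓinf
  have hℓ_ne_top : lE ≠ ⊤ := by
    obtain ⟨i, hi⟩ := hne_top
    intro hcon
    exact hi (top_le_iff.1 (hcon ▸ Finset.inf_le (Finset.mem_univ i)))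
  set ℓ : ℕ := lE.toNat with hℓ
  have hℓcoe : (ℓ : ℕ∞) = lE := ENat.coe_toNat hℓ_ne_top
  have hcomp : ∀ i, ∃ c : ℂ, Tendsto (fun z => (z⁻¹)^ℓ * t z i) (𝓝[≠] (0:ℂ)) (𝓝 c) ∧
      (o i = (ℓ : ℕ∞) → c ≠ 0) := by
    intro i
    by_cases htop : o i = ⊤
    · refine ⟨0, ?_, ?_⟩
      · have hev := (analyticOrderAt_eq_top).1 htop
        have heq : (fun z : ℂ => (z⁻¹)^ℓ * t z i) =ᶠ[𝓝[≠] (0:ℂ)] fun _ => (0:ℂ) := by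
          filter_upwards [hev.filter_mono nhdsWithin_le_nhds] with z hz
          rw [hz, mul_zero]
        rw [Filter.tendsto_congr' heq]
        exact tendsto_const_nhds
      · intro hℓeq
        rw [hℓeq] at htop
        exact absurd htop (by simp)
    · obtain ⟨n, hn⟩ : ∃ n : ℕ, o i = n := ⟨(o i).toNat, (ENat.coe_toNat htop).symm⟩
      obtain ⟨u, hu_an, hu0, hu_ev⟩ := ((hA i).analyticOrderAt_eq_natCast (n := n)).1 hn
      have hℓn : ℓ ≤ n := by
        have h1 : lE ≤ o i := Finset.inf_le (Finset.mem_univ i)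
        rw [hn, ← hℓcoe] at h1
        exact_mod_cast h1
      refine ⟨(0:ℂ)^(n - ℓ) * u 0, ?_, ?_⟩
      · have hcont : Tendsto (fun z : ℂ => z^(n-ℓ) * u z) (𝓝 0) (𝓝 ((0:ℂ)^(n-ℓ) * u 0)) :=
          ((continuous_pow (n-ℓ)).continuousAt).tendsto.mul hu_an.continuousAt
        refine Tendsto.congr' ?_ (hcont.mono_left nhdsWithin_le_nhds)
        filter_upwards [hu_ev.filter_mono nhdsWithin_le_nhds, self_mem_nhdsWithin]
          with z hz hz0
        have hz0' : z ≠ 0 := hz0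
        rw [hz]
        simp only [sub_zero, smul_eq_mul]
        have h1 : z ^ n = z^(n-ℓ) * z^ℓ := by rw [← pow_add, Nat.sub_add_cancel hℓn]
        rw [h1, inv_pow]
        field_simp
      · intro hoℓ
        have hnl : n = ℓ := by
          rw [hn] at hoℓ; exact_mod_cast hoℓ
        rw [hnl, Nat.sub_self, pow_zero, one_mul]
        exact hu0
  choose c hc hcne using hcomp
  set w : ℂ → Fin (N'+1) → ℂ := fun z => (z⁻¹)^ℓ • t z with hw
  have hw_t : Tendsto w (𝓝[≠] (0:ℂ)) (𝓝 c) := by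
    rw [tendsto_pi_nhds]
    intro i
    exact hc i
  have hc_ne : c ≠ 0 := by
    intro hcz
    have hoi0 : o i0 = (ℓ : ℕ∞) := by rw [hℓcoe]; exact hi0.symm
    exact hcne i0 hoi0 (by rw [hcz]; rfl)
  set s' : ℂ → Fin (N'+1) → ℂ := Function.update w 0 c with hs'
  have hs'_eq : ∀ z : ℂ, z ≠ 0 → s' z = w z := fun z hz => Function.update_of_ne hz _ _
  have hw_diff : DifferentiableOn ℂ w (D \ {0}) := by
    apply DifferentiableOn.fun_smul
    · intro z hz
      have hz0 : z ≠ 0 := fun h => hz.2 (by simp [h])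
      exact ((differentiableAt_id.inv hz0).pow ℓ).differentiableWithinAt
    · exact ht_diff.mono Set.diff_subset
  have hs'_cont : ContinuousAt s' 0 := by
    have h1 : Tendsto s' (𝓝[≠] (0:ℂ)) (𝓝 c) := by
      refine Tendsto.congr' ?_ hw_t
      filter_upwards [self_mem_nhdsWithin] with z hz
      exact (hs'_eq z hz).symm
    have h2 : s' 0 = c := Function.update_self _ _ _
    rw [ContinuousAt, h2, ← nhdsNE_sup_pure]
    rw [Filter.tendsto_sup]
    exact ⟨h1, by rw [← h2]; exact tendsto_pure_nhds s' 0⟩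
  have hs'_diff : DifferentiableOn ℂ s' D := by
    refine (Complex.differentiableOn_compl_singleton_and_continuousAt_iff hDnhds).1 ⟨?_, hs'_cont⟩
    exact hw_diff.congr (fun z hz => hs'_eq z (fun h => hz.2 (by simp [h])))
  have hs'_ne : ∀ z ∈ D, s' z ≠ 0 := by
    intro z hzD
    rcases eq_or_ne z 0 with rfl | hz0
    · rw [hs', Function.update_self]; exact hc_ne
    · rw [hs'_eq z hz0]
      exact smul_ne_zero (pow_ne_zero _ (inv_ne_zero hz0)) (ht_ne z ⟨hzD, by simp [hz0]⟩)
  refine ⟨s', (ℓ : ℤ) - (M : ℤ), hs'_diff, hs'_ne, ?_⟩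
  intro z hz
  have hz0 : z ≠ 0 := fun h => hz.2 (by simp [h])
  rw [hs'_eq z hz0]
  show (ρ (g z)).mulVec (s z) = z ^ ((ℓ : ℤ) - (M : ℤ)) • ((z⁻¹)^ℓ • t z)
  rw [ht_eq z hz, smul_smul, smul_smul]
  have hsc : z ^ ((ℓ : ℤ) - (M : ℤ)) * (z⁻¹)^ℓ * z^M = 1 := by
    rw [zpow_sub₀ hz0, zpow_natCast, zpow_natCast, inv_pow]
    field_simp
  rw [hsc, one_smul]
end

section
/- Let F be a compact Riemannian manifold, ξ a Killing/gradient vector field on F which is the gradient of a smooth function h: F → ℝ (i.e. ξ = ∇h), and let φ: [t₀, ∞) → F be a C¹ curve satisfying φ'(t) = -2ξ(φ(t)) + ℰ(t) with |ℰ(t)| ≤ e^{-t}. Then |ξ(φ(t))| → 0 as t → ∞. -/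
theorem stmt13_drop {f f' : ℝ → ℝ} {a b c : ℝ} (hab : a ≤ b)
    (hder : ∀ t ∈ Set.Icc a b, HasDerivAt f (f' t) t)
    (hle : ∀ t ∈ Set.Icc a b, f' t ≤ -c) :
    f b ≤ f a - c * (b - a) := by
  set g : ℝ → ℝ := fun t => f t + c * t with hg
  have hgder : ∀ t ∈ Set.Icc a b, HasDerivAt g (f' t + c) t := fun t ht =>
    (hder t ht).add (by simpa using (hasDerivAt_id t).const_mul c)
  have hanti : AntitoneOn g (Set.Icc a b) := by
    apply antitoneOn_of_deriv_nonpos (convex_Icc a b)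
    · exact fun t ht => ((hgder t ht).continuousAt).continuousWithinAt
    · intro t ht
      have ht' : t ∈ Set.Icc a b := interior_subset ht
      exact ((hgder t ht').differentiableAt).differentiableWithinAt
    · intro t ht
      have ht' : t ∈ Set.Icc a b := interior_subset ht
      rw [(hgder t ht').deriv]
      have := hle t ht'
      linarith
  have := hanti (Set.left_mem_Icc.2 hab) (Set.right_mem_Icc.2 hab) hab
  simp only [hg] at this
  nlinarith

/-- Let `F` be a compact set (in a real Hilbert space, playing the role
of the compact Riemannian manifold), `ξ = ∇h` the gradient of a `C¹` function `h`
(with `ξ` continuous), and `φ : [t₀,∞) → F` a `C¹` curve satisfying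
`φ'(t) = -2ξ(φ(t)) + ℰ(t)` with `‖ℰ(t)‖ ≤ e^{-t}`.  Then `‖ξ(φ(t))‖ → 0` as
`t → ∞`. -/
theorem stmt_13 {E : Type*} [NormedAddCommGroup E] [InnerProductSpace ℝ E]
    [CompleteSpace E]
    (K : Set E) (hK : IsCompact K)
    (h : E → ℝ) (ξ : E → E) (hξc : Continuous ξ)
    (hgrad : ∀ x : E, HasGradientAt h (ξ x) x)
    (t₀ : ℝ) (φ : ℝ → E) (hφK : ∀ t, t₀ ≤ t → φ t ∈ K)
    (ℰ : ℝ → E) (hℰ : ∀ t, t₀ ≤ t → ‖ℰ t‖ ≤ Real.exp (-t))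
    (hφ : ∀ t, t₀ ≤ t → HasDerivAt φ ((-2 : ℝ) • ξ (φ t) + ℰ t) t) :
    Filter.Tendsto (fun t => ‖ξ (φ t)‖) Filter.atTop (nhds 0) := by
  -- bound on ‖ξ‖ over K
  obtain ⟨M₀, hM₀⟩ := hK.exists_bound_of_continuousOn (hξc.norm.continuousOn)
  set M : ℝ := max M₀ 0 with hMdef
  have hM : ∀ x ∈ K, ‖ξ x‖ ≤ M := fun x hx => le_trans (by simpa using hM₀ x hx) (le_max_left _ _)
  have hM0 : 0 ≤ M := le_max_right _ _
  -- the Lyapunov function `g` and its derivative `g'`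
  set g : ℝ → ℝ := fun t => h (φ t) + M * Real.exp (-t) with hgdef
  set g' : ℝ → ℝ := fun t =>
    (inner ℝ (ξ (φ t)) ((-2 : ℝ) • ξ (φ t) + ℰ t) : ℝ) - M * Real.exp (-t) with hg'def
  have hgder : ∀ t, t₀ ≤ t → HasDerivAt g (g' t) t := by
    intro t ht
    have h1 : HasDerivAt (fun s => h (φ s))
        ((inner ℝ (ξ (φ t)) ((-2 : ℝ) • ξ (φ t) + ℰ t) : ℝ)) t := by
      have := ((hgrad (φ t)).hasFDerivAt).comp_hasDerivAt t (hφ t ht)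
      simpa [InnerProductSpace.toDual_apply_apply, Function.comp_def] using this
    have h2 : HasDerivAt (fun s => M * Real.exp (-s)) (-(M * Real.exp (-t))) t := by
      have : HasDerivAt (fun s : ℝ => Real.exp (-s)) (-Real.exp (-t)) t := by
        simpa [Function.comp_def] using (Real.hasDerivAt_exp (-t)).comp t ((hasDerivAt_id t).neg)
      simpa [mul_comm, mul_assoc, mul_neg] using this.const_mul M
    have heq : g' t = (inner ℝ (ξ (φ t)) ((-2 : ℝ) • ξ (φ t) + ℰ t) : ℝ)
        + -(M * Real.exp (-t)) := by
      simp [hg'def, sub_eq_add_neg]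
    rw [heq]
    exact h1.add h2
  -- derivative bound: `g' t ≤ -2‖ξ(φ t)‖²`
  have hg'le : ∀ t, t₀ ≤ t → g' t ≤ -(2 * ‖ξ (φ t)‖ ^ 2) := by
    intro t ht
    have hinner : (inner ℝ (ξ (φ t)) ((-2 : ℝ) • ξ (φ t) + ℰ t) : ℝ)
        = -2 * ‖ξ (φ t)‖ ^ 2 + (inner ℝ (ξ (φ t)) (ℰ t) : ℝ) := by
      rw [inner_add_right, real_inner_smul_right, real_inner_self_eq_norm_sq]
      try ring
    have habs : (inner ℝ (ξ (φ t)) (ℰ t) : ℝ) ≤ M * Real.exp (-t) := by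
      calc (inner ℝ (ξ (φ t)) (ℰ t) : ℝ) ≤ ‖ξ (φ t)‖ * ‖ℰ t‖ := real_inner_le_norm _ _
        _ ≤ M * Real.exp (-t) :=
          mul_le_mul (hM _ (hφK t ht)) (hℰ t ht) (norm_nonneg _)
            hM0
    simp only [hg'def, hinner]
    linarith
  -- `g` is antitone on `[t₀,∞)` and bounded below
  have hanti : ∀ a b, t₀ ≤ a → a ≤ b → g b ≤ g a := by
    intro a b ha hab
    have := stmt13_drop (f := g) (f' := g') (c := 0) hab
      (fun t ht => hgder t (le_trans ha ht.1))
      (fun t ht => le_trans (hg'le t (le_trans ha ht.1)) (by nlinarith [sq_nonneg ‖ξ (φ t)‖]))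
    linarith
  obtain ⟨B, hB⟩ : ∃ B, ∀ x ∈ K, B ≤ h x := by
    have hKne : K.Nonempty := ⟨φ t₀, hφK t₀ le_rfl⟩
    have hhc : Continuous h := by
      apply continuous_iff_continuousAt.2
      intro x
      exact (hgrad x).hasFDerivAt.differentiableAt.continuousAt
    obtain ⟨x, hx, hxmin⟩ := hK.exists_isMinOn hKne hhc.continuousOn
    exact ⟨h x, fun y hy => hxmin hy⟩
  have hgB : ∀ t, t₀ ≤ t → B ≤ g t := by
    intro t ht
    have h1 := hB _ (hφK t ht)
    have h2 : (0:ℝ) ≤ M * Real.exp (-t) := by positivity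
    simp only [hgdef]
    linarith
  -- speed bound on φ
  set C : ℝ := 2 * M + Real.exp (-t₀) with hCdef
  have hC0 : 0 ≤ C := by positivity
  have hφlip : ∀ a b, t₀ ≤ a → a ≤ b → ‖φ b - φ a‖ ≤ C * (b - a) := by
    intro a b ha hab
    have := Convex.norm_image_sub_le_of_norm_hasDerivWithin_le
      (f := φ) (f' := fun t => (-2 : ℝ) • ξ (φ t) + ℰ t) (s := Set.Ici t₀) (C := C)
      (fun t ht => (hφ t ht).hasDerivWithinAt)
      (fun t ht => by
        calc ‖(-2 : ℝ) • ξ (φ t) + ℰ t‖ ≤ ‖(-2 : ℝ) • ξ (φ t)‖ + ‖ℰ t‖ := norm_add_le _ _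
          _ ≤ 2 * M + Real.exp (-t₀) := by
              have h1 : ‖(-2 : ℝ) • ξ (φ t)‖ = 2 * ‖ξ (φ t)‖ := by
                rw [norm_smul]; simp
              have h2 := hM _ (hφK t ht)
              have h3 := hℰ t ht
              have ht' : t₀ ≤ t := ht
              have h4 : Real.exp (-t) ≤ Real.exp (-t₀) := Real.exp_le_exp.2 (by linarith)
              rw [h1]; linarith)
      (convex_Ici t₀) ha (le_trans ha hab)
    calc ‖φ b - φ a‖ ≤ C * ‖b - a‖ := this
      _ = C * (b - a) := by rw [Real.norm_eq_abs, abs_of_nonneg (by linarith)]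
  -- main argument by contradiction
  rw [Metric.tendsto_atTop]
  by_contra hcon
  push_neg at hcon
  obtain ⟨ε, hε, hbad⟩ := hcon
  -- uniform continuity of ξ on K
  have hUC := hK.uniformContinuousOn_of_continuous hξc.continuousOn
  obtain ⟨δ', hδ'0, hδ'⟩ := Metric.uniformContinuousOn_iff.1 hUC (ε/2) (by linarith)
  set δ : ℝ := δ' / (2 * (C + 1)) with hδdef
  have hδ0 : 0 < δ := by positivity
  clear_value M g g' C δ
  -- each bad time produces a definite drop of g over [t, t+δ]
  have hdrop : ∀ t, t₀ ≤ t → ε ≤ ‖ξ (φ t)‖ → g (t + δ) ≤ g t - ε^2/2 * δ := by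
    intro t ht hbig
    have hkey : ∀ s ∈ Set.Icc t (t + δ), g' s ≤ -(ε^2/2) := by
      intro s hs
      have hst₀ : t₀ ≤ s := le_trans ht hs.1
      have hclose : ‖ξ (φ s) - ξ (φ t)‖ < ε / 2 := by
        have hd : dist (φ s) (φ t) < δ' := by
          rw [dist_eq_norm]
          calc ‖φ s - φ t‖ ≤ C * (s - t) := hφlip t s ht hs.1
            _ ≤ C * δ := by
                have : s - t ≤ δ := by linarith [hs.2]
                nlinarith
            _ < δ' := by
                rw [hδdef]
                have h2C : C / (2 * (C + 1)) < 1 := by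
                  rw [div_lt_one (by linarith)]; linarith
                calc C * (δ' / (2 * (C + 1))) = δ' * (C / (2 * (C + 1))) := by ring
                  _ < δ' * 1 := by nlinarith
                  _ = δ' := mul_one _
        have := hδ' _ (hφK s hst₀) _ (hφK t ht) hd
        rwa [dist_eq_norm] at this
      have hbig2 : ε / 2 ≤ ‖ξ (φ s)‖ := by
        have h6 : ‖ξ (φ t)‖ - ‖ξ (φ s)‖ ≤ ‖ξ (φ s) - ξ (φ t)‖ := by
          have := norm_sub_norm_le (ξ (φ t)) (ξ (φ s))
          rwa [norm_sub_rev] at this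
        linarith
      have h7 := hg'le s hst₀
      have h8 : (ε/2)^2 ≤ ‖ξ (φ s)‖^2 := by
        apply pow_le_pow_left₀ (by linarith) hbig2
      nlinarith
    have := stmt13_drop (f := g) (f' := g') (a := t) (b := t + δ) (c := ε^2/2)
      (by linarith) (fun s hs => hgder s (le_trans ht hs.1)) hkey
    calc g (t + δ) ≤ g t - ε^2/2 * (t + δ - t) := this
      _ = g t - ε^2/2 * δ := by ring_nf
  -- iterate the drop to contradict boundedness below
  have hstep : ∀ n : ℕ, ∃ t, t₀ ≤ t ∧ g t ≤ g t₀ - n * (ε^2/2 * δ) := by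
    intro n; induction n with
    | zero => exact ⟨t₀, le_rfl, by simp⟩
    | succ n ih =>
      obtain ⟨t, ht, hgt⟩ := ih
      obtain ⟨s, hst, hsbig⟩ := hbad t
      have hst₀ : t₀ ≤ s := le_trans ht hst
      have hsbig' : ε ≤ ‖ξ (φ s)‖ := by
        simpa [Real.dist_eq, abs_of_nonneg (norm_nonneg _)] using hsbig
      refine ⟨s + δ, by linarith, ?_⟩
      have h1 := hdrop s hst₀ hsbig'
      have h2 := hanti t s ht hst
      have h3 : ((n:ℝ)+1) * (ε^2/2*δ) = (n:ℝ)*(ε^2/2*δ) + ε^2/2*δ := by ring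
      push_cast
      linarith
  obtain ⟨n, hn⟩ := exists_nat_gt ((g t₀ - B) / (ε^2/2 * δ))
  obtain ⟨t, ht, hgt⟩ := hstep n
  have hBt := hgB t ht
  have hd0 : (0:ℝ) < ε^2/2 * δ := mul_pos (by positivity) hδ0
  rw [div_lt_iff₀ hd0] at hn
  linarith
end

section
/- Let F be a compact Riemannian manifold and let V be a smooth vector field on F whose zero set Z = {V = 0} is closed. Let ψ: [t₀,∞) × S¹ → F be smooth. Suppose that for each t the loop θ ↦ ψ(t,θ) satisfies |∂_θψ(t,θ) + V(ψ(t,θ))| ≤ δ(t) for all θ, with δ(t) → 0 as t → ∞, and that the fixed-point set of the time-2π flow of -V equals Z. Then sup_θ dist(ψ(t,θ), Z) → 0 as t → ∞. -/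
open Metric Filter Real

theorem gronwall_aux_linear (K : ℝ) (ε x : ℝ) :
    gronwallBound 0 K ε x = ε * gronwallBound 0 K 1 x := by
  unfold gronwallBound
  split <;> ring

/-- Let `F` (here: a compact subset `K` of a normed space, playing the
role of the compact manifold) carry a Lipschitz vector field `V` with zero set
`Z = {V = 0}`, and let `Φ` be the flow of `-V`, preserving `K`, whose time-`2π` map
fixes exactly the points of `Z` in `K`.  Suppose `γ(t,·)` is a family of
`2π`-periodic loops in `K` satisfying `‖∂_θ γ + V(γ)‖ ≤ δ(t)` with `δ(t) → 0` as
`t → ∞`.  Then `sup_θ dist(γ(t,θ), Z) → 0` as `t → ∞`. -/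
theorem stmt_17 {E : Type*} [NormedAddCommGroup E] [NormedSpace ℝ E]
    (K : Set E) (hK : IsCompact K)
    (V : E → E) (LV : NNReal) (hLip : LipschitzWith LV V)
    (Φ : ℝ → E → E)
    (hΦ0 : ∀ x, Φ 0 x = x)
    (hΦadd : ∀ s t : ℝ, ∀ x, Φ (s + t) x = Φ s (Φ t x))
    (hΦderiv : ∀ x, ∀ t : ℝ, HasDerivAt (fun u => Φ u x) (-(V (Φ t x))) t)
    (hΦK : ∀ t : ℝ, ∀ x ∈ K, Φ t x ∈ K)
    (hfix : ∀ x ∈ K, (Φ (2 * Real.pi) x = x ↔ V x = 0))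
    (γ : ℝ → ℝ → E) (γ' : ℝ → ℝ → E) (δ : ℝ → ℝ)
    (hγK : ∀ t θ : ℝ, γ t θ ∈ K)
    (hγper : ∀ t θ : ℝ, γ t (θ + 2 * Real.pi) = γ t θ)
    (hγdiff : ∀ t θ : ℝ, HasDerivAt (γ t) (γ' t θ) θ)
    (hγapprox : ∀ t θ : ℝ, ‖γ' t θ + V (γ t θ)‖ ≤ δ t)
    (hδ : Filter.Tendsto δ Filter.atTop (nhds 0)) :
    ∀ ε > (0 : ℝ), ∃ T : ℝ, ∀ t ≥ T, ∀ θ : ℝ,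
      Metric.infDist (γ t θ) {x | V x = 0} ≤ ε := by
  intro ε hε
  set Z : Set E := {x | V x = 0} with hZ
  -- Lipschitz bound for -V
  have hLipneg : ∀ s : ℝ, LipschitzWith LV (fun x => -V x) := by
    intro _ x y
    simpa [edist_neg_neg] using hLip x y
  -- Gronwall estimate: for every t θ₀, dist (γ t θ₀) (Φ (2π) (γ t θ₀)) ≤ B t
  set B : ℝ → ℝ := fun t => gronwallBound 0 (LV : ℝ) (δ t) (2 * Real.pi) with hB
  have key : ∀ t θ₀ : ℝ, dist (γ t θ₀) (Φ (2 * Real.pi) (γ t θ₀)) ≤ B t := by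
    intro t θ₀
    have twopi_pos : (0 : ℝ) < 2 * Real.pi := by positivity
    have hmem : θ₀ + 2 * Real.pi ∈ Set.Icc θ₀ (θ₀ + 2 * Real.pi) := by
      constructor <;> nlinarith
    have hg' : ∀ θ : ℝ, HasDerivAt (fun u => Φ (u - θ₀) (γ t θ₀))
        (-(V (Φ (θ - θ₀) (γ t θ₀)))) θ := by
      intro θ
      have h1 := hΦderiv (γ t θ₀) (θ - θ₀)
      have h2 : HasDerivAt (fun u : ℝ => u - θ₀) 1 θ := by
        simpa using (hasDerivAt_id θ).sub_const θ₀
      have := h1.scomp θ h2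
      simpa [Function.comp_def] using this
    have := dist_le_of_approx_trajectories_ODE (v := fun _ x => -V x)
      (K := LV) (f := γ t) (f' := γ' t)
      (g := fun u => Φ (u - θ₀) (γ t θ₀))
      (g' := fun u => -(V (Φ (u - θ₀) (γ t θ₀))))
      (a := θ₀) (b := θ₀ + 2 * Real.pi) (εf := δ t) (εg := 0) (δ := 0)
      hLipneg
      (fun θ _ => ((hγdiff t θ)).continuousAt.continuousWithinAt)
      (fun θ _ => (hγdiff t θ).hasDerivWithinAt)
      (fun θ _ => by
        rw [dist_eq_norm]
        simpa [sub_neg_eq_add] using hγapprox t θ)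
      (fun θ _ => (hg' θ).continuousAt.continuousWithinAt)
      (fun θ _ => (hg' θ).hasDerivWithinAt)
      (fun θ _ => le_of_eq (dist_self _))
      (by simp [hΦ0])
      (θ₀ + 2 * Real.pi) hmem
    simpa [hγper t θ₀, hB] using this
  -- B tends to 0
  have hBtendsto : Tendsto B atTop (nhds 0) := by
    have : B = fun t => δ t * gronwallBound 0 (LV : ℝ) 1 (2 * Real.pi) := by
      funext t
      exact gronwall_aux_linear _ _ _
    rw [this]
    simpa using hδ.mul_const (gronwallBound 0 (LV : ℝ) 1 (2 * Real.pi))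
  -- the "bad" compact set
  set S : Set E := K ∩ {x | ε ≤ infDist x Z} with hS
  have hScompact : IsCompact S := by
    apply hK.inter_right
    have : IsClosed {x : E | ε ≤ infDist x Z} := by
      have : {x : E | ε ≤ infDist x Z} = (fun x => infDist x Z) ⁻¹' Set.Ici ε := rfl
      rw [this]
      exact isClosed_Ici.preimage (continuous_infDist_pt Z)
    exact this
  -- distance moved by the time-2π map, positive on S
  set f : E → ℝ := fun x => dist x (Φ (2 * Real.pi) x) with hf
  have hfpos : ∀ x ∈ S, 0 < f x := by
    rintro x ⟨hxK, hxd⟩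
    rcases eq_or_lt_of_le (dist_nonneg (x := x) (y := Φ (2 * Real.pi) x)) with h | h
    · exfalso
      have hfixx : Φ (2 * Real.pi) x = x := (dist_eq_zero.mp h.symm).symm
      have hVx : V x = 0 := (hfix x hxK).mp hfixx
      have : infDist x Z = 0 := by
        apply infDist_zero_of_mem
        exact hVx
      have hεle : ε ≤ infDist x Z := hxd
      rw [this] at hεle
      linarith
    · exact h
  -- find c > 0 with f ≥ c on S (or trivial if S empty)
  -- the time-2π map is Lipschitz (Gronwall), hence continuous
  have hΦlip : ∀ x y : E,
      dist (Φ (2 * Real.pi) x) (Φ (2 * Real.pi) y) ≤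
        Real.exp ((LV : ℝ) * (2 * Real.pi)) * dist x y := by
    intro x y
    have twopi_pos : (0 : ℝ) < 2 * Real.pi := by positivity
    have hmem : (2 * Real.pi) ∈ Set.Icc (0 : ℝ) (2 * Real.pi) := by
      constructor <;> nlinarith
    have := dist_le_of_trajectories_ODE (v := fun _ z => -V z) (K := LV)
      (f := fun u => Φ u x) (g := fun u => Φ u y)
      (a := 0) (b := 2 * Real.pi) (δ := dist x y)
      hLipneg
      (fun u _ => (hΦderiv x u).continuousAt.continuousWithinAt)
      (fun u _ => (hΦderiv x u).hasDerivWithinAt)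
      (fun u _ => (hΦderiv y u).continuousAt.continuousWithinAt)
      (fun u _ => (hΦderiv y u).hasDerivWithinAt)
      (by simp [hΦ0])
      (2 * Real.pi) hmem
    calc dist (Φ (2 * Real.pi) x) (Φ (2 * Real.pi) y)
        ≤ dist x y * Real.exp ((LV : ℝ) * (2 * Real.pi - 0)) := this
      _ = Real.exp ((LV : ℝ) * (2 * Real.pi)) * dist x y := by ring_nf
  have hΦcont : Continuous (fun x => Φ (2 * Real.pi) x) := by
    refine LipschitzWith.continuous
      (K := Real.toNNReal (Real.exp ((LV : ℝ) * (2 * Real.pi)))) ?_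
    apply LipschitzWith.of_dist_le_mul
    intro x y
    rw [Real.coe_toNNReal _ (Real.exp_nonneg _)]
    exact hΦlip x y
  have hfcont : Continuous f := continuous_id.dist hΦcont
  by_cases hSne : S.Nonempty
  · obtain ⟨x₀, hx₀S, hmin⟩ := hScompact.exists_isMinOn hSne hfcont.continuousOn
    have hc : 0 < f x₀ := hfpos x₀ hx₀S
    obtain ⟨T, hT⟩ := (Filter.eventually_atTop).mp (hBtendsto.eventually_lt_const hc)
    refine ⟨T, fun t ht θ => ?_⟩
    by_contra hcon
    push_neg at hcon
    have hmemS : γ t θ ∈ S := ⟨hγK t θ, le_of_lt hcon⟩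
    have h1 : f x₀ ≤ f (γ t θ) := hmin hmemS
    have h2 : f (γ t θ) ≤ B t := key t θ
    have h3 : B t < f x₀ := hT t ht
    linarith
  · refine ⟨0, fun t _ θ => ?_⟩
    by_contra hcon
    push_neg at hcon
    exact hSne ⟨γ t θ, hγK t θ, le_of_lt hcon⟩
end
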